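/- arXiv:1810.08311 — 5 statements merged into one kernel-verified Lean document; each statement's English description precedes it below -/
import Mathlib

section
/- Let H be an N×K complex matrix admitting a compact singular value decomposition H = U · diag(s) · Vᴴ, where U is an N×K complex matrix with Uᴴ U = I, V is a K×K unitary matrix, and s : Fin K → ℝ has s i > 0 for every i. Then HᴴH is invertible and the zero-forcing precoder satisfies H · (HᴴH)⁻¹ = U · diag(s⁻¹) · Vᴴ, where diag(s⁻¹) is the diagonal matrix with entries 1/(s i). -/
/-!
Since `Uᴴ U = 1`, `Hᴴ H = V (Dᴴ D) Vᴴ` with `D = diag s`, which is invertible because `V` is unitary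
and `D` is. Then `H (Hᴴ H)⁻¹ = U D Vᴴ V D⁻¹ Dᴴ⁻¹ Vᴴ = U Dᴴ⁻¹ Vᴴ`, and `Dᴴ⁻¹ = diag s⁻¹` as `s` is real.
-/

open Matrix

namespace Matrix

variable {m n R : Type*} [Fintype m] [Fintype n] [DecidableEq n] [CommRing R] [StarRing R]

theorem conjTranspose_mul_self_isometry_mul_mul {U : Matrix m n R} (hU : Uᴴ * U = 1)
    (A V : Matrix n n R) :
    (U * A * Vᴴ)ᴴ * (U * A * Vᴴ) = V * (Aᴴ * A) * Vᴴ := by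
  simp only [conjTranspose_mul, conjTranspose_conjTranspose, Matrix.mul_assoc]
  rw [← Matrix.mul_assoc Uᴴ, hU, Matrix.one_mul]

theorem inv_eq_conjTranspose_of_mem_unitaryGroup {V : Matrix n n R}
    (hV : V ∈ unitaryGroup n R) : V⁻¹ = Vᴴ :=
  inv_eq_left_inv hV.1

theorem isUnit_conjTranspose_mul_self_isometry_mul_mul {U : Matrix m n R} (hU : Uᴴ * U = 1)
    {A V : Matrix n n R} (hA : IsUnit A) (hV : V ∈ unitaryGroup n R) :
    IsUnit ((U * A * Vᴴ)ᴴ * (U * A * Vᴴ)) := by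
  have hVu : IsUnit V := (Unitary.toUnits ⟨V, hV⟩).isUnit
  rw [conjTranspose_mul_self_isometry_mul_mul hU]
  exact (hVu.mul (((isUnit_conjTranspose A).2 hA).mul hA)).mul ((isUnit_conjTranspose V).2 hVu)

theorem isometry_mul_mul_mul_inv_conjTranspose_mul_self {U : Matrix m n R} (hU : Uᴴ * U = 1)
    {A V : Matrix n n R} (hA : IsUnit A) (hV : V ∈ unitaryGroup n R) :
    U * A * Vᴴ * ((U * A * Vᴴ)ᴴ * (U * A * Vᴴ))⁻¹ = U * Aᴴ⁻¹ * Vᴴ := by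
  have hVV : Vᴴ * V = 1 := hV.1
  have hVV' : V * Vᴴ = 1 := mem_unitaryGroup_iff.mp hV
  rw [conjTranspose_mul_self_isometry_mul_mul hU, mul_inv_rev, mul_inv_rev, mul_inv_rev,
    inv_eq_conjTranspose_of_mem_unitaryGroup hV, inv_eq_left_inv hVV']
  simp only [Matrix.mul_assoc]
  rw [← Matrix.mul_assoc Vᴴ V, hVV, Matrix.one_mul, ← Matrix.mul_assoc A,
    mul_nonsing_inv _ ((isUnit_iff_isUnit_det A).1 hA), Matrix.one_mul]

theorem inv_conjTranspose_diagonal {K : Type*} [Field K] [StarRing K] {d : n → K}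
    (hd : ∀ i, d i ≠ 0) :
    (diagonal d)ᴴ⁻¹ = diagonal fun i => 1 / star (d i) := by
  refine inv_eq_left_inv ?_
  rw [diagonal_conjTranspose, ← diagonal_one, diagonal_mul_diagonal]
  congr 1
  ext i
  simp [hd i]

end Matrix

/-- SVD form of the zero-forcing precoder:
if `H = U * diag s * Vᴴ` is a compact SVD with positive singular values,
then `HᴴH` is invertible and `H * (Hᴴ * H)⁻¹ = U * diag s⁻¹ * Vᴴ`. -/
theorem zf_precoder_svd (N K : ℕ)
    (H : Matrix (Fin N) (Fin K) ℂ)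
    (U : Matrix (Fin N) (Fin K) ℂ)
    (V : Matrix (Fin K) (Fin K) ℂ) (hV : V ∈ Matrix.unitaryGroup (Fin K) ℂ)
    (s : Fin K → ℝ) (hs : ∀ i, 0 < s i)
    (hU : Uᴴ * U = 1)
    (hH : H = U * Matrix.diagonal (fun i => (s i : ℂ)) * Vᴴ) :
    IsUnit (Hᴴ * H) ∧
    H * (Hᴴ * H)⁻¹ = U * Matrix.diagonal (fun i => (1 / (s i : ℂ))) * Vᴴ := by
  have hs0 : ∀ i, (s i : ℂ) ≠ 0 := fun i => Complex.ofReal_ne_zero.2 (hs i).ne'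
  have hD : IsUnit (diagonal fun i => (s i : ℂ)) :=
    isUnit_diagonal.2 (Pi.isUnit_iff.2 fun i => (hs0 i).isUnit)
  have hDinv : (diagonal fun i => (s i : ℂ))ᴴ⁻¹ = diagonal fun i => 1 / (s i : ℂ) := by
    simp only [inv_conjTranspose_diagonal hs0, Complex.star_def, Complex.conj_ofReal]
  subst hH
  rw [← hDinv]
  exact ⟨isUnit_conjTranspose_mul_self_isometry_mul_mul hU hD hV,
    isometry_mul_mul_mul_inv_conjTranspose_mul_self hU hD hV⟩
end

section
/- Let H be an N×K complex matrix admitting a compact singular value decomposition H = U · diag(s) · Vᴴ with Uᴴ U = I, V unitary, and s i > 0 for all i. Then the transmitted power of the zero-forcing precoder P_ZF = H (HᴴH)⁻¹ is trace(P_ZF · P_ZFᴴ) = ∑_{i=1}^{K} 1/(s i)², i.e., the trace equals the sum of the reciprocals of the squared singular values (as a complex number equal to this real sum). -/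
open Matrix

theorem diag_mul_diag_assoc {K : ℕ} {n : Type*} [Fintype n] (d e : Fin K → ℂ)
    (B : Matrix (Fin K) n ℂ) :
    Matrix.diagonal d * (Matrix.diagonal e * B) = Matrix.diagonal (fun i => d i * e i) * B := by
  rw [← Matrix.mul_assoc, Matrix.diagonal_mul_diagonal]

/-- Transmitted power of the zero-forcing precoder equals the sum of the
reciprocals of the squared singular values. -/
theorem zf_precoder_power (N K : ℕ)
    (H : Matrix (Fin N) (Fin K) ℂ)
    (U : Matrix (Fin N) (Fin K) ℂ)
    (V : Matrix (Fin K) (Fin K) ℂ) (hV : V ∈ Matrix.unitaryGroup (Fin K) ℂ)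
    (s : Fin K → ℝ) (hs : ∀ i, 0 < s i)
    (hU : Uᴴ * U = 1)
    (hH : H = U * Matrix.diagonal (fun i => (s i : ℂ)) * Vᴴ) :
    Matrix.trace ((H * (Hᴴ * H)⁻¹) * (H * (Hᴴ * H)⁻¹)ᴴ)
      = ((∑ i, 1 / (s i) ^ 2 : ℝ) : ℂ) := by
  have hs0 : ∀ i, (s i : ℂ) ≠ 0 := fun i => by
    exact_mod_cast (hs i).ne'
  have hV1 : Vᴴ * V = 1 := by
    have := hV.1
    rwa [Matrix.star_eq_conjTranspose] at this
  have hV2 : V * Vᴴ = 1 := by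
    have := hV.2
    rwa [Matrix.star_eq_conjTranspose] at this
  set D : Matrix (Fin K) (Fin K) ℂ := Matrix.diagonal (fun i => (s i : ℂ)) with hD
  have hDH : Dᴴ = D := by
    simp [hD, Matrix.diagonal_conjTranspose]
  have e1 : (fun i => (s i : ℂ) * s i) = fun i => (s i : ℂ) ^ 2 := by
    funext i; rw [sq]
  have e2 : (fun i => (s i : ℂ) ^ 2 * ((s i : ℂ) ^ 2)⁻¹) = fun _ => (1 : ℂ) := by
    funext i; exact mul_inv_cancel₀ (pow_ne_zero 2 (hs0 i))
  have e3 : (fun i => (s i : ℂ) * ((s i : ℂ) ^ 2)⁻¹) = fun i => ((s i : ℂ))⁻¹ := by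
    funext i; rw [sq, mul_inv, ← mul_assoc, mul_inv_cancel₀ (hs0 i), one_mul]
  have e4 : (fun i => ((s i : ℂ))⁻¹ * ((s i : ℂ))⁻¹) = fun i => ((s i : ℂ) ^ 2)⁻¹ := by
    funext i; rw [← mul_inv, ← sq]
  have hHtH : Hᴴ * H = V * (Matrix.diagonal (fun i => ((s i : ℂ)) ^ 2) * Vᴴ) := by
    rw [hH]
    simp only [Matrix.conjTranspose_mul, Matrix.conjTranspose_conjTranspose, hDH,
      Matrix.mul_assoc]
    rw [← Matrix.mul_assoc Uᴴ U, hU, Matrix.one_mul, hD, diag_mul_diag_assoc, e1]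
  have hInv : (Hᴴ * H)⁻¹ = V * (Matrix.diagonal (fun i => ((s i : ℂ) ^ 2)⁻¹) * Vᴴ) := by
    apply Matrix.inv_eq_right_inv
    rw [hHtH]
    simp only [Matrix.mul_assoc]
    rw [← Matrix.mul_assoc Vᴴ V, hV1, Matrix.one_mul, diag_mul_diag_assoc, e2]
    simpa using hV2
  have hP : H * (Hᴴ * H)⁻¹ = U * (Matrix.diagonal (fun i => ((s i : ℂ))⁻¹) * Vᴴ) := by
    rw [hInv, hH]
    simp only [Matrix.mul_assoc]
    rw [← Matrix.mul_assoc Vᴴ V, hV1, Matrix.one_mul, hD, diag_mul_diag_assoc, e3]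
  rw [hP]
  have hdiagH : (Matrix.diagonal (fun i => ((s i : ℂ))⁻¹))ᴴ
      = Matrix.diagonal (fun i => ((s i : ℂ))⁻¹) := by
    simp [Matrix.diagonal_conjTranspose]
  have key : U * (Matrix.diagonal (fun i => ((s i : ℂ))⁻¹) * Vᴴ)
      * (U * (Matrix.diagonal (fun i => ((s i : ℂ))⁻¹) * Vᴴ))ᴴ
      = U * (Matrix.diagonal (fun i => ((s i : ℂ) ^ 2)⁻¹) * Uᴴ) := by
    simp only [Matrix.conjTranspose_mul, Matrix.conjTranspose_conjTranspose, hdiagH,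
      Matrix.mul_assoc]
    rw [← Matrix.mul_assoc Vᴴ V, hV1, Matrix.one_mul, diag_mul_diag_assoc, e4]
  rw [key, ← Matrix.mul_assoc, Matrix.trace_mul_cycle, hU, Matrix.one_mul,
    Matrix.trace_diagonal]
  push_cast
  congr 1
  funext i
  rw [one_div]
end

section
/- Let H be an N×K complex matrix admitting a compact singular value decomposition H = U · diag(s) · Vᴴ with Uᴴ U = I, V unitary, and s i > 0 for all i. Let P_ZF = H (HᴴH)⁻¹ be the zero-forcing precoder, and let P_PGP = diag(t) · Wᴴ be a PGP precoder, where t : Fin K → ℝ and W is a K×K unitary matrix. Then the total power of the combined ZF-PGP precoder satisfies trace((P_ZF · P_PGP)(P_ZF · P_PGP)ᴴ) = trace(M · diag(t²)), where M = V · diag(s⁻²) · Vᴴ and diag(t²) has diagonal entries (t m)². -/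
/-!
The Gram matrix of `H = U diag(s) Vᴴ` is `V diag(s²) Vᴴ`, whose inverse is `V diag(s⁻²) Vᴴ`,
so the zero-forcing precoder is `U diag(s⁻¹) Vᴴ`. Cyclicity of the trace turns the power of
`P_ZF P_PGP` into `trace(P_ZFᴴ P_ZF · P_PGP P_PGPᴴ)`; the isometries `U` and `W` cancel there,
leaving `trace(V diag(s⁻²) Vᴴ · diag(t²))`.
-/

open Matrix

namespace Matrix

variable {m n k α : Type*} [Fintype n]

lemma trace_mul_mul_conjTranspose [Fintype m] [Fintype k] [CommSemiring α] [StarRing α]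
    (A : Matrix m n α) (B : Matrix n k α) :
    trace ((A * B) * (A * B)ᴴ) = trace ((Aᴴ * A) * (B * Bᴴ)) := by
  calc trace (A * B * (A * B)ᴴ) = trace (A * (B * Bᴴ * Aᴴ)) := by
        simp only [conjTranspose_mul, Matrix.mul_assoc]
    _ = trace (B * Bᴴ * Aᴴ * A) := trace_mul_comm _ _
    _ = trace (Aᴴ * A * (B * Bᴴ)) := by rw [Matrix.mul_assoc (B * Bᴴ), trace_mul_comm]

lemma conjTranspose_mul_self_of_isometry [Fintype m] [DecidableEq n] [Semiring α] [StarRing α]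
    {U : Matrix m n α} (hU : Uᴴ * U = 1) (A : Matrix n k α) : (U * A)ᴴ * (U * A) = Aᴴ * A := by
  rw [conjTranspose_mul, Matrix.mul_assoc, ← Matrix.mul_assoc Uᴴ, hU, Matrix.one_mul]

lemma mul_conjTranspose_self_of_isometry [Fintype m] [DecidableEq n] [Semiring α] [StarRing α]
    {W : Matrix m n α} (hW : Wᴴ * W = 1) (A : Matrix k n α) : (A * Wᴴ) * (A * Wᴴ)ᴴ = A * Aᴴ := by
  rw [conjTranspose_mul, conjTranspose_conjTranspose, Matrix.mul_assoc, ← Matrix.mul_assoc Wᴴ, hW,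
    Matrix.one_mul]

lemma conjTranspose_mul_self_of_svd [Fintype m] [DecidableEq n] [Semiring α] [StarRing α]
    {U : Matrix m n α} (hU : Uᴴ * U = 1) (A : Matrix n n α) (V : Matrix k n α) :
    (U * A * Vᴴ)ᴴ * (U * A * Vᴴ) = V * (Aᴴ * A) * Vᴴ := by
  rw [Matrix.mul_assoc, conjTranspose_mul_self_of_isometry hU, conjTranspose_mul,
    conjTranspose_conjTranspose]
  simp only [Matrix.mul_assoc]

lemma inv_conj_of_mem_unitaryGroup [DecidableEq n] [CommRing α] [StarRing α] {V : Matrix n n α}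
    (hV : V ∈ unitaryGroup n α) (A : Matrix n n α) : (V * A * Vᴴ)⁻¹ = V * A⁻¹ * Vᴴ := by
  have hVinv : V⁻¹ = Vᴴ := inv_eq_left_inv (mem_unitaryGroup_iff'.mp hV)
  rw [mul_inv_rev, mul_inv_rev, ← conjTranspose_nonsing_inv, hVinv, conjTranspose_conjTranspose,
    Matrix.mul_assoc]

lemma diagonal_conjTranspose_mul_diagonal [Semiring α] [StarRing α] [DecidableEq n] (d : n → α) :
    (diagonal d)ᴴ * diagonal d = diagonal (fun i => star (d i) * d i) := by
  rw [diagonal_conjTranspose, diagonal_mul_diagonal]; rfl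

lemma diagonal_mul_conjTranspose_diagonal [Semiring α] [StarRing α] [DecidableEq n] (d : n → α) :
    diagonal d * (diagonal d)ᴴ = diagonal (fun i => d i * star (d i)) := by
  rw [diagonal_conjTranspose, diagonal_mul_diagonal]; rfl

lemma inv_diagonal_of_ne_zero [DecidableEq n] [Field α] {v : n → α} (hv : ∀ i, v i ≠ 0) :
    (diagonal v)⁻¹ = diagonal v⁻¹ := by
  refine inv_eq_right_inv ?_
  rw [diagonal_mul_diagonal, ← diagonal_one]
  exact congrArg diagonal (funext fun i => mul_inv_cancel₀ (hv i))

lemma mul_inv_conjTranspose_mul_self_of_svd [Fintype m] [DecidableEq n] [Field α] [StarRing α]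
    {H U : Matrix m n α} {V : Matrix n n α} {d : n → α} (hU : Uᴴ * U = 1)
    (hV : V ∈ unitaryGroup n α) (hd : ∀ i, d i ≠ 0) (hH : H = U * diagonal d * Vᴴ) :
    H * (Hᴴ * H)⁻¹ = U * diagonal (fun i => (star (d i))⁻¹) * Vᴴ := by
  have hVV : Vᴴ * V = 1 := mem_unitaryGroup_iff'.mp hV
  have hgram : Hᴴ * H = V * diagonal (fun i => star (d i) * d i) * Vᴴ := by
    rw [hH, conjTranspose_mul_self_of_svd hU, diagonal_conjTranspose_mul_diagonal]
  rw [hgram, inv_conj_of_mem_unitaryGroup hV,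
    inv_diagonal_of_ne_zero fun i => mul_ne_zero (star_ne_zero.mpr (hd i)) (hd i), hH]
  calc U * diagonal d * Vᴴ * (V * diagonal (fun i => star (d i) * d i)⁻¹ * Vᴴ)
      = U * (diagonal d * (Vᴴ * V) * diagonal (fun i => star (d i) * d i)⁻¹) * Vᴴ := by
        simp only [Matrix.mul_assoc]
    _ = U * diagonal (fun i => (star (d i))⁻¹) * Vᴴ := by
        rw [hVV, Matrix.mul_one, diagonal_mul_diagonal]
        congr 3
        funext i
        rw [Pi.inv_apply, mul_inv, mul_left_comm, mul_inv_cancel₀ (hd i), mul_one]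

end Matrix

/-- Total power of the combined ZF-PGP precoder:
`trace((P_ZF P_PGP)(P_ZF P_PGP)ᴴ) = trace(M * diag(t²))`
with `M = V * diag(s⁻²) * Vᴴ`. -/
theorem zf_pgp_power (N K : ℕ)
    (H : Matrix (Fin N) (Fin K) ℂ)
    (U : Matrix (Fin N) (Fin K) ℂ)
    (V : Matrix (Fin K) (Fin K) ℂ) (hV : V ∈ Matrix.unitaryGroup (Fin K) ℂ)
    (s : Fin K → ℝ) (hs : ∀ i, 0 < s i)
    (hU : Uᴴ * U = 1)
    (hH : H = U * Matrix.diagonal (fun i => (s i : ℂ)) * Vᴴ)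
    (t : Fin K → ℝ)
    (W : Matrix (Fin K) (Fin K) ℂ) (hW : W ∈ Matrix.unitaryGroup (Fin K) ℂ) :
    Matrix.trace
      (((H * (Hᴴ * H)⁻¹) * (Matrix.diagonal (fun m => (t m : ℂ)) * Wᴴ)) *
        ((H * (Hᴴ * H)⁻¹) * (Matrix.diagonal (fun m => (t m : ℂ)) * Wᴴ))ᴴ)
      = Matrix.trace
          ((V * Matrix.diagonal (fun i => (1 / (s i : ℂ) ^ 2)) * Vᴴ) *
            Matrix.diagonal (fun m => ((t m : ℂ) ^ 2))) := by
  have hs' : ∀ i, (s i : ℂ) ≠ 0 := fun i => Complex.ofReal_ne_zero.mpr (hs i).ne'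
  rw [mul_inv_conjTranspose_mul_self_of_svd hU hV hs' hH, trace_mul_mul_conjTranspose,
    conjTranspose_mul_self_of_svd hU,
    mul_conjTranspose_self_of_isometry (mem_unitaryGroup_iff'.mp hW),
    diagonal_conjTranspose_mul_diagonal, diagonal_mul_conjTranspose_diagonal]
  simp only [Complex.star_def, Complex.conj_ofReal, map_inv₀, one_div, sq, mul_inv]
end

section
/- (Theorem 1, power-constraint reformulation.) Let H be an N×K complex matrix admitting a compact singular value decomposition H = U · diag(s) · Vᴴ with Uᴴ U = I, V unitary, and s i > 0 for all i. Let P_ZF = H (HᴴH)⁻¹, let t : Fin K → ℝ, let W be a K×K unitary matrix, and let P_PGP = diag(t) · Wᴴ. Define the re-weighting coefficients w m = √(∑_{m'} |V_{m,m'}|² / (s m')²). Then the total transmitted power of the combined ZF-PGP precoder satisfies trace((P_ZF · P_PGP)(P_ZF · P_PGP)ᴴ) = (∑_m (w m)² · (t m)² : ℂ); consequently, the overall power constraint trace((P_ZF P_PGP)(P_ZF P_PGP)ᴴ) = K holds if and only if ∑_m (w m · t m)² = K, i.e., if and only if the re-weighted PGP powers satisfy an ordinary PGP-type power constraint. -/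
open Matrix

/-- Theorem 1 (power-constraint reformulation): the total transmitted power of
the ZF-PGP precoder equals `∑ m, (w m)² (t m)²`, so the overall power
constraint `= K` holds iff `∑ m, (w m * t m)² = K`. -/
theorem zf_pgp_power_reformulation (N K : ℕ)
    (H : Matrix (Fin N) (Fin K) ℂ)
    (U : Matrix (Fin N) (Fin K) ℂ)
    (V : Matrix (Fin K) (Fin K) ℂ) (hV : V ∈ Matrix.unitaryGroup (Fin K) ℂ)
    (s : Fin K → ℝ) (hs : ∀ i, 0 < s i)
    (hU : Uᴴ * U = 1)
    (hH : H = U * Matrix.diagonal (fun i => (s i : ℂ)) * Vᴴ)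
    (t : Fin K → ℝ)
    (W : Matrix (Fin K) (Fin K) ℂ) (hW : W ∈ Matrix.unitaryGroup (Fin K) ℂ)
    (w : Fin K → ℝ)
    (hw : ∀ m, w m = Real.sqrt (∑ m', ‖V m m'‖ ^ 2 / (s m') ^ 2)) :
    Matrix.trace
      (((H * (Hᴴ * H)⁻¹) * (Matrix.diagonal (fun m => (t m : ℂ)) * Wᴴ)) *
        ((H * (Hᴴ * H)⁻¹) * (Matrix.diagonal (fun m => (t m : ℂ)) * Wᴴ))ᴴ)
      = ((∑ m, (w m) ^ 2 * (t m) ^ 2 : ℝ) : ℂ) ∧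
    (Matrix.trace
      (((H * (Hᴴ * H)⁻¹) * (Matrix.diagonal (fun m => (t m : ℂ)) * Wᴴ)) *
        ((H * (Hᴴ * H)⁻¹) * (Matrix.diagonal (fun m => (t m : ℂ)) * Wᴴ))ᴴ)
      = (K : ℂ) ↔ (∑ m, (w m * t m) ^ 2 : ℝ) = (K : ℝ)) := by
  have hV1 : Vᴴ * V = 1 := by simpa [star_eq_conjTranspose] using hV.1
  have hV2 : V * Vᴴ = 1 := by simpa [star_eq_conjTranspose] using hV.2
  have hW1 : Wᴴ * W = 1 := by simpa [star_eq_conjTranspose] using hW.1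
  set T : Matrix (Fin K) (Fin K) ℂ := diagonal (fun i => (t i : ℂ)) with hT
  set D : Matrix (Fin K) (Fin K) ℂ := diagonal (fun i => (s i : ℂ)) with hD
  set Di : Matrix (Fin K) (Fin K) ℂ := diagonal (fun i => ((s i : ℂ))⁻¹) with hDi
  have hsC : ∀ i, (s i : ℂ) ≠ 0 := fun i => by exact_mod_cast (hs i).ne'
  have hDH : Dᴴ = D := by
    simp [hD, diagonal_conjTranspose, Pi.star_def, Complex.conj_ofReal]
  have hDiH : Diᴴ = Di := by
    simp [hDi, diagonal_conjTranspose, Pi.star_def, Complex.conj_ofReal]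
  have hTH : Tᴴ = T := by
    simp [hT, diagonal_conjTranspose, Pi.star_def, Complex.conj_ofReal]
  have hDDi : D * Di = 1 := by
    rw [hD, hDi, diagonal_mul_diagonal]
    have : (fun i => (s i:ℂ) * ((s i:ℂ))⁻¹) = fun _ => (1:ℂ) :=
      funext fun i => mul_inv_cancel₀ (hsC i)
    rw [this, diagonal_one]
  have hHH : Hᴴ * H = V * (D * (D * Vᴴ)) := by
    rw [hH]
    simp only [conjTranspose_mul, conjTranspose_conjTranspose, hDH, Matrix.mul_assoc]
    rw [← Matrix.mul_assoc Uᴴ U, hU, Matrix.one_mul]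
  have hinv : (Hᴴ * H)⁻¹ = V * (Di * (Di * Vᴴ)) := by
    apply inv_eq_right_inv
    rw [hHH]
    simp only [Matrix.mul_assoc]
    rw [← Matrix.mul_assoc Vᴴ V, hV1, Matrix.one_mul,
        ← Matrix.mul_assoc D Di, hDDi, Matrix.one_mul,
        ← Matrix.mul_assoc D Di, hDDi, Matrix.one_mul, hV2]
  have hPZF : H * (Hᴴ * H)⁻¹ = U * (Di * Vᴴ) := by
    rw [hinv, hH]
    simp only [Matrix.mul_assoc]
    rw [← Matrix.mul_assoc Vᴴ V, hV1, Matrix.one_mul,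
        ← Matrix.mul_assoc D Di, hDDi, Matrix.one_mul]
  -- simplify the product and its trace
  have h1 : ((H * (Hᴴ * H)⁻¹) * (T * Wᴴ)) * ((H * (Hᴴ * H)⁻¹) * (T * Wᴴ))ᴴ
      = U * (Di * (Vᴴ * (T * (T * (V * (Di * Uᴴ)))))) := by
    rw [hPZF]
    simp only [conjTranspose_mul, conjTranspose_conjTranspose, hDiH, hTH, Matrix.mul_assoc]
    rw [← Matrix.mul_assoc Wᴴ W, hW1, Matrix.one_mul]
  have h2 : Matrix.trace (((H * (Hᴴ * H)⁻¹) * (T * Wᴴ)) * ((H * (Hᴴ * H)⁻¹) * (T * Wᴴ))ᴴ)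
      = Matrix.trace (Di * (Vᴴ * (T * (T * (V * Di))))) := by
    rw [h1, Matrix.trace_mul_comm]
    simp only [Matrix.mul_assoc]
    rw [hU]
    simp only [Matrix.mul_one, Matrix.one_mul]
  -- entrywise evaluation of the trace
  have h3 : Matrix.trace (Di * (Vᴴ * (T * (T * (V * Di)))))
      = ∑ j, ∑ i, ((s i:ℂ))⁻¹ *
          ((starRingEnd ℂ) (V j i) * ((t j:ℂ) * ((t j:ℂ) * (V j i * ((s i:ℂ))⁻¹)))) := by
    rw [Finset.sum_comm]
    simp only [Matrix.trace, Matrix.diag, hD, hDi, hT]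
    simp only [Matrix.diagonal_mul]
    refine Finset.sum_congr rfl fun i _ => ?_
    rw [Matrix.mul_apply, Finset.mul_sum]
    refine Finset.sum_congr rfl fun j _ => ?_
    simp only [Matrix.diagonal_mul, Matrix.mul_diagonal, Matrix.conjTranspose_apply,
      Complex.star_def]
  have hw2 : ∀ m, (w m)^2 = ∑ m', ‖V m m'‖^2 / (s m')^2 := fun m => by
    rw [hw m]
    exact Real.sq_sqrt (Finset.sum_nonneg fun _ _ => div_nonneg (sq_nonneg _) (sq_nonneg _))
  have key : Matrix.trace
      (((H * (Hᴴ * H)⁻¹) * (T * Wᴴ)) * ((H * (Hᴴ * H)⁻¹) * (T * Wᴴ))ᴴ)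
      = ((∑ m, (w m) ^ 2 * (t m) ^ 2 : ℝ) : ℂ) := by
    rw [h2, h3]
    have : (∑ m, (w m) ^ 2 * (t m) ^ 2 : ℝ)
        = ∑ m, ∑ m', (‖V m m'‖^2 / (s m')^2) * (t m)^2 := by
      simp only [hw2, Finset.sum_mul]
    rw [this]
    push_cast
    refine Finset.sum_congr rfl fun j _ => Finset.sum_congr rfl fun i _ => ?_
    have hc : (starRingEnd ℂ) (V j i) * V j i = ((‖V j i‖:ℂ))^2 := by
      rw [Complex.conj_mul']
    rw [← hc]
    field_simp
  refine ⟨key, ?_⟩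
  rw [key]
  have hsum : (∑ m, (w m * t m) ^ 2 : ℝ) = (∑ m, (w m) ^ 2 * (t m) ^ 2 : ℝ) := by
    simp [mul_pow]
  rw [hsum]
  constructor
  · intro h
    exact_mod_cast h
  · intro h
    exact_mod_cast h
end

section
/- (Corollary 1, effective-channel representation.) Let H be an N×K complex matrix admitting a compact singular value decomposition H = U · diag(s) · Vᴴ with Uᴴ U = I, V unitary, and s i > 0 for all i; let P_ZF = H (HᴴH)⁻¹, t : Fin K → ℝ, W a K×K unitary matrix, P_PGP = diag(t) · Wᴴ, and w m = √(∑_{m'} |V_{m,m'}|² / (s m')²). Define the effective channel singular value matrix Σ_eff = diag(1/(w m)) and the effective PGP precoder P_eff = diag(w m · t m) · Wᴴ. Then: (1) the overall zero-forced downlink map equals the effective-channel model, i.e., Hᴴ · P_ZF · P_PGP = Σ_eff · P_eff; and (2) the effective precoder carries the physical power, i.e., trace(P_eff · P_effᴴ) = trace((P_ZF · P_PGP)(P_ZF · P_PGP)ᴴ). -/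
open Matrix

/-- Corollary 1 (effective-channel representation): the zero-forced downlink
with a PGP precoder equals the effective channel model
`Σ_eff * P_eff`, and the effective precoder carries the physical power. -/
theorem zf_pgp_effective_channel (N K : ℕ)
    (H : Matrix (Fin N) (Fin K) ℂ)
    (U : Matrix (Fin N) (Fin K) ℂ)
    (V : Matrix (Fin K) (Fin K) ℂ) (hV : V ∈ Matrix.unitaryGroup (Fin K) ℂ)
    (s : Fin K → ℝ) (hs : ∀ i, 0 < s i)
    (hU : Uᴴ * U = 1)
    (hH : H = U * Matrix.diagonal (fun i => (s i : ℂ)) * Vᴴ)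
    (t : Fin K → ℝ)
    (W : Matrix (Fin K) (Fin K) ℂ) (hW : W ∈ Matrix.unitaryGroup (Fin K) ℂ)
    (w : Fin K → ℝ)
    (hw : ∀ m, w m = Real.sqrt (∑ m', ‖V m m'‖ ^ 2 / (s m') ^ 2)) :
    Hᴴ * ((H * (Hᴴ * H)⁻¹) * (Matrix.diagonal (fun m => (t m : ℂ)) * Wᴴ))
      = Matrix.diagonal (fun m => (1 / (w m) : ℂ)) *
          (Matrix.diagonal (fun m => ((w m : ℂ) * (t m : ℂ))) * Wᴴ) ∧
    Matrix.trace
      ((Matrix.diagonal (fun m => ((w m : ℂ) * (t m : ℂ))) * Wᴴ) *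
        (Matrix.diagonal (fun m => ((w m : ℂ) * (t m : ℂ))) * Wᴴ)ᴴ)
      = Matrix.trace
          (((H * (Hᴴ * H)⁻¹) * (Matrix.diagonal (fun m => (t m : ℂ)) * Wᴴ)) *
            ((H * (Hᴴ * H)⁻¹) * (Matrix.diagonal (fun m => (t m : ℂ)) * Wᴴ))ᴴ) := by
  have hVV : Vᴴ * V = 1 := hV.1
  have hVV' : V * Vᴴ = 1 := hV.2
  have hWW : Wᴴ * W = 1 := hW.1
  set D : Matrix (Fin K) (Fin K) ℂ := Matrix.diagonal (fun i => (s i : ℂ)) with hD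
  set E : Matrix (Fin K) (Fin K) ℂ := Matrix.diagonal (fun i => ((s i : ℂ))⁻¹) with hE
  have hsne : ∀ i, (s i : ℂ) ≠ 0 := fun i => Complex.ofReal_ne_zero.mpr (hs i).ne'
  have hDE : D * E = 1 := by
    rw [hD, hE, Matrix.diagonal_mul_diagonal,
      show (fun i => (s i : ℂ) * ((s i : ℂ))⁻¹) = fun _ => 1 from
        funext fun i => mul_inv_cancel₀ (hsne i), Matrix.diagonal_one]
  have hDH : Dᴴ = D := by
    rw [hD]
    simp [Matrix.diagonal_conjTranspose, Pi.star_def, Complex.conj_ofReal]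
  have hEH : Eᴴ = E := by
    rw [hE]
    simp [Matrix.diagonal_conjTranspose, Pi.star_def, star_inv₀, Complex.conj_ofReal]
  -- cancellation helpers
  have hVc' : ∀ X : Matrix (Fin K) (Fin K) ℂ, V * (Vᴴ * X) = X := fun X => by
    rw [← Matrix.mul_assoc, hVV', Matrix.one_mul]
  have hVc : ∀ X : Matrix (Fin K) (Fin K) ℂ, Vᴴ * (V * X) = X := fun X => by
    rw [← Matrix.mul_assoc, hVV, Matrix.one_mul]
  have hWc : ∀ X : Matrix (Fin K) (Fin K) ℂ, Wᴴ * (W * X) = X := fun X => by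
    rw [← Matrix.mul_assoc, hWW, Matrix.one_mul]
  have hDEc : ∀ X : Matrix (Fin K) (Fin K) ℂ, D * (E * X) = X := fun X => by
    rw [← Matrix.mul_assoc, hDE, Matrix.one_mul]
  have hHH : Hᴴ * H = V * (D * (D * Vᴴ)) := by
    rw [hH]
    have hUc : ∀ X : Matrix (Fin K) (Fin K) ℂ, Uᴴ * (U * X) = X := fun X => by
      rw [← Matrix.mul_assoc, hU, Matrix.one_mul]
    simp only [Matrix.conjTranspose_mul, Matrix.conjTranspose_conjTranspose, hDH,
      Matrix.mul_assoc, hUc]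
  have hG : (Hᴴ * H) * (V * (E * (E * Vᴴ))) = 1 := by
    rw [hHH]
    simp only [Matrix.mul_assoc, hVc, hDEc, hVV']
  have hInv : (Hᴴ * H)⁻¹ = V * (E * (E * Vᴴ)) := Matrix.inv_eq_right_inv hG
  -- positivity of w
  have hwpos : ∀ m, 0 < w m := by
    intro m
    rw [hw]
    apply Real.sqrt_pos.mpr
    have h1 : ∑ k, V m k * star (V m k) = 1 := by
      have := congrFun (congrFun hVV' m) m
      simpa [Matrix.mul_apply, Matrix.conjTranspose_apply, Matrix.one_apply] using this
    have hk : ∃ k, V m k ≠ 0 := by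
      by_contra h
      push_neg at h
      simp [h] at h1
    obtain ⟨k, hk⟩ := hk
    apply Finset.sum_pos' (fun i _ => by positivity)
    refine ⟨k, Finset.mem_univ k, ?_⟩
    exact div_pos (pow_pos (norm_pos_iff.mpr hk) 2) (pow_pos (hs k) 2)
  have hwne : ∀ m, (w m : ℂ) ≠ 0 := fun m => Complex.ofReal_ne_zero.mpr (hwpos m).ne'
  constructor
  · -- part 1
    have hHP : Hᴴ * ((H * (Hᴴ * H)⁻¹) * (Matrix.diagonal (fun m => (t m : ℂ)) * Wᴴ))
        = Matrix.diagonal (fun m => (t m : ℂ)) * Wᴴ := by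
      rw [hInv, Matrix.mul_assoc, ← Matrix.mul_assoc Hᴴ H, hHH]
      simp only [Matrix.mul_assoc, hVc, hVc', hDEc]
    rw [hHP, ← Matrix.mul_assoc, Matrix.diagonal_mul_diagonal,
      show (fun i => (1 / (w i) : ℂ) * ((w i : ℂ) * (t i : ℂ))) = fun m => (t m : ℂ) from
        funext fun m => by
        rw [one_div, inv_mul_eq_div, mul_div_assoc, mul_comm,
          div_mul_cancel₀ _ (hwne m)]]
  · -- part 2
    have hP : H * (Hᴴ * H)⁻¹ = U * (E * Vᴴ) := by
      rw [hInv, hH]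
      simp only [Matrix.mul_assoc, hVc, hDEc]
    rw [hP]
    set T : Matrix (Fin K) (Fin K) ℂ := Matrix.diagonal (fun m => (t m : ℂ)) with hT
    have hTH : Tᴴ = T := by
      rw [hT]
      simp [Matrix.diagonal_conjTranspose, Pi.star_def, Complex.conj_ofReal]
    -- RHS trace
    have hRHS : Matrix.trace ((U * (E * Vᴴ) * (T * Wᴴ)) * (U * (E * Vᴴ) * (T * Wᴴ))ᴴ)
        = Matrix.trace (E * (Vᴴ * (T * (T * (V * E))))) := by
      simp only [Matrix.conjTranspose_mul, Matrix.conjTranspose_conjTranspose, hTH, hEH]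
      rw [Matrix.mul_assoc U, Matrix.mul_assoc U, Matrix.trace_mul_comm]
      simp only [Matrix.mul_assoc, hWc]
      rw [show Uᴴ * U = (1 : Matrix (Fin K) (Fin K) ℂ) from hU]
      simp only [Matrix.mul_one]
    have hLHS : Matrix.trace
        ((Matrix.diagonal (fun m => ((w m : ℂ) * (t m : ℂ))) * Wᴴ) *
          (Matrix.diagonal (fun m => ((w m : ℂ) * (t m : ℂ))) * Wᴴ)ᴴ)
        = ∑ m, ((w m : ℂ) * t m) ^ 2 := by
      have hstar : (Matrix.diagonal (fun m => ((w m : ℂ) * (t m : ℂ))))ᴴ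
          = Matrix.diagonal (fun m => ((w m : ℂ) * (t m : ℂ))) := by
        simp [Matrix.diagonal_conjTranspose, Pi.star_def, Complex.conj_ofReal]
      rw [Matrix.conjTranspose_mul, Matrix.conjTranspose_conjTranspose, hstar]
      rw [Matrix.mul_assoc, ← Matrix.mul_assoc Wᴴ W, hWW, Matrix.one_mul,
        Matrix.diagonal_mul_diagonal, Matrix.trace_diagonal]
      exact Finset.sum_congr rfl fun m _ => (sq _).symm
    rw [hRHS, hLHS]
    -- now compute both sides as sums
    have htr : Matrix.trace (E * (Vᴴ * (T * (T * (V * E)))))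
        = ∑ m', ∑ m, ((s m' : ℂ))⁻¹ * (star (V m m') * ((t m : ℂ) * (t m : ℂ)) * V m m')
            * ((s m' : ℂ))⁻¹ := by
      rw [Matrix.trace]
      congr 1
      funext m'
      rw [show E * (Vᴴ * (T * (T * (V * E)))) = E * Vᴴ * T * T * V * E by
        simp only [Matrix.mul_assoc]]
      simp only [Matrix.diag_apply, hE, hT, Matrix.mul_apply, Matrix.diagonal_apply,
        Matrix.conjTranspose_apply]
      simp [Finset.mul_sum, Finset.sum_mul, mul_assoc, Finset.sum_ite_eq, Finset.sum_ite_eq']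
    rw [htr, Finset.sum_comm]
    apply Finset.sum_congr rfl
    intro m _
    have hwsq : (w m : ℝ) ^ 2 = ∑ m', ‖V m m'‖ ^ 2 / (s m') ^ 2 := by
      rw [hw]
      exact Real.sq_sqrt (Finset.sum_nonneg fun i _ => by positivity)
    have hcast : ((w m : ℂ) * t m) ^ 2 = ((w m ^ 2 * t m ^ 2 : ℝ) : ℂ) := by
      push_cast; ring
    rw [hcast, hwsq]
    push_cast [Finset.sum_mul, Finset.sum_div]
    apply Finset.sum_congr rfl
    intro m' _
    have hnorm : ((‖V m m'‖ : ℂ)) ^ 2 = star (V m m') * V m m' := by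
      rw [Complex.star_def, RCLike.conj_mul]
      norm_cast
    rw [show ((‖V m m'‖:ℂ))^2 = star (V m m') * V m m' from hnorm]
    field_simp
end
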